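/- Let 0 < α < 1, λ > 0, κ > 0, γ > 0 and M > 0. Let f : [0,∞) → [0,∞) be bounded measurable and let H : ℝ → ℝ be increasing and locally Lipschitz with H(x) = 0 for x ≤ 0. Define F_{α,λ}(t) = λ⁻¹ ∫₀ᵗ (t−s)^{−α} f(s) ds, r₊(s) = H(γ κ F_{α,λ}(s)), r₋(s) = H(γ κ F_{α,λ}(s) − κ ∫₀ˢ λ⁻¹ (s−u)^{−α} H(γ κ F_{α,λ}(u)) du), and MI₊(γ,t) = κ ∫₀ᵗ (1 + λ⁻¹ (t−s)^{−α}) (γ f(s) − r₋(s)) ds, MI₋(γ,t) = κ ∫₀ᵗ (1 + λ⁻¹ (t−s)^{−α}) (γ f(s) − r₊(s)) ds. Let r_γ : [0,M] → ℝ be a continuous solution of the impact Volterra equation r_γ(t) = H(κ ∫₀ᵗ λ⁻¹ (t−s)^{−α} (γ f(s) − r_γ(s)) ds) and MI(γ,t) = κ ∫₀ᵗ (1 + λ⁻¹ (t−s)^{−α}) (γ f(s) − r_γ(s)) ds. Then for all t ∈ [0,M], r₋(t) ≤ r_γ(t) ≤ r₊(t), and consequently MI₋(γ,t) ≤ MI(γ,t)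 ≤ MI₊(γ,t). -/

import Mathlib

/-!
Write `T g (t) = H (κ ∫₀ᵗ λ⁻¹ (t - s)^(-α) (γ f(s) - g(s)) ds)`. The kernel is nonnegative and `H`
is monotone, so `T` is antitone in `g`; moreover `r₊ = T 0` and `r₋ = T r₊`. A solution satisfies
`r = T r ≥ 0` because `H ≥ 0`, hence `r = T r ≤ T 0 = r₊` and then `r₋ = T r₊ ≤ T r = r`. The
market impact is antitone in the rate for the same reason. All integrals make sense because the
kernel is integrable for `α < 1` and every rate involved is bounded and measurable on `[0, M]`.
-/

open MeasureTheory Set Filter Topology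
open scoped Interval

theorem measurable_intervalIntegral_of_measurable_uncurry {g : ℝ → ℝ → ℝ}
    (hg : Measurable (Function.uncurry g)) (a : ℝ) :
    Measurable fun t => ∫ s in a..t, g t s := by
  have hIoc : ∀ l u : ℝ → ℝ, Measurable l → Measurable u →
      Measurable fun t => ∫ s in Ioc (l t) (u t), g t s := by
    intro l u hl hu
    simp_rw [← integral_indicator measurableSet_Ioc]
    refine StronglyMeasurable.measurable
      (StronglyMeasurable.integral_prod_right
        (f := fun t => (Ioc (l t) (u t)).indicator (g t)) ?_)
    have hS : MeasurableSet {p : ℝ × ℝ | p.2 ∈ Ioc (l p.1) (u p.1)} :=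
      (measurableSet_lt (hl.comp measurable_fst) measurable_snd).inter
        (measurableSet_le measurable_snd (hu.comp measurable_fst))
    exact (hg.indicator hS).stronglyMeasurable
  exact (hIoc (fun _ => a) id measurable_const measurable_id).sub
    (hIoc id (fun _ => a) measurable_id measurable_const)

theorem IntervalIntegrable.mul_memLp_top {w g : ℝ → ℝ} {a b : ℝ}
    (hw : IntervalIntegrable w volume a b) (hg : MemLp g ⊤ (volume.restrict (Ι a b))) :
    IntervalIntegrable (fun s => w s * g s) volume a b :=
  intervalIntegrable_iff.2 ((intervalIntegrable_iff.1 hw).mul_of_top_left hg)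

theorem intervalIntegral.integral_mul_mono_on_of_memLp_top {w g₁ g₂ : ℝ → ℝ} {a b : ℝ}
    (hab : a ≤ b) (hw : IntervalIntegrable w volume a b) (hw_nonneg : ∀ s ∈ Icc a b, 0 ≤ w s)
    (hg₁ : MemLp g₁ ⊤ (volume.restrict (Ι a b))) (hg₂ : MemLp g₂ ⊤ (volume.restrict (Ι a b)))
    (h : ∀ s ∈ Icc a b, g₁ s ≤ g₂ s) :
    ∫ s in a..b, w s * g₁ s ≤ ∫ s in a..b, w s * g₂ s :=
  integral_mono_on hab (hw.mul_memLp_top hg₁) (hw.mul_memLp_top hg₂) fun s hs =>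
    mul_le_mul_of_nonneg_left (h s hs) (hw_nonneg s hs)

theorem memLp_top_restrict_of_forall_norm_le {X E : Type*} [MeasurableSpace X]
    [NormedAddCommGroup E] {μ : Measure X} {g : X → E} {K : Set X} {D : ℝ}
    (hK : MeasurableSet K) (hg : AEStronglyMeasurable g (μ.restrict K))
    (h : ∀ x ∈ K, ‖g x‖ ≤ D) : MemLp g ⊤ (μ.restrict K) :=
  memLp_top_of_bound hg D (ae_restrict_of_forall_mem hK h)

theorem ContinuousOn.memLp_top_restrict {X E : Type*} [TopologicalSpace X] [MeasurableSpace X]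
    [OpensMeasurableSpace X] [NormedAddCommGroup E] [SecondCountableTopologyEither X E]
    {μ : Measure X} {g : X → E} {K : Set X} (hK : IsCompact K) (hK' : MeasurableSet K)
    (hg : ContinuousOn g K) : MemLp g ⊤ (μ.restrict K) := by
  obtain ⟨D, hD⟩ := hK.exists_bound_of_continuousOn hg
  exact memLp_top_restrict_of_forall_norm_le hK' (hg.aestronglyMeasurable hK') hD

theorem MeasureTheory.MemLp.restrict_uIoc {g : ℝ → ℝ} {M t : ℝ}
    (hg : MemLp g ⊤ (volume.restrict (Icc 0 M))) (ht : t ∈ Icc 0 M) :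
    MemLp g ⊤ (volume.restrict (Ι 0 t)) := by
  refine hg.mono_measure (Measure.restrict_mono ?_ le_rfl)
  rw [uIoc_of_le ht.1]
  exact Ioc_subset_Icc_self.trans (Icc_subset_Icc_right ht.2)

section FractionalPrimitive

variable {α lam : ℝ}

theorem intervalIntegrable_sub_rpow_neg (hα : α < 1) (a t : ℝ) :
    IntervalIntegrable (fun s => (t - s) ^ (-α)) volume a t := by
  simpa using ((intervalIntegral.intervalIntegrable_rpow' (a := 0) (b := t - a)
    (by linarith)).comp_sub_left t).symm

theorem integral_sub_rpow_neg (hα : α < 1) (t : ℝ) :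
    ∫ s in (0:ℝ)..t, (t - s) ^ (-α) = t ^ (1 - α) / (1 - α) := by
  rw [intervalIntegral.integral_comp_sub_left (fun x => x ^ (-α)) t, sub_self, sub_zero,
    integral_rpow (Or.inl (by linarith)), Real.zero_rpow (by linarith), sub_zero, neg_add_eq_sub]

noncomputable def fractionalPrimitive (α lam : ℝ) (g : ℝ → ℝ) (t : ℝ) : ℝ :=
  lam⁻¹ * ∫ s in (0:ℝ)..t, (t - s) ^ (-α) * g s

theorem fractionalPrimitive_eq_integral (g : ℝ → ℝ) (t : ℝ) :
    fractionalPrimitive α lam g t = ∫ s in (0:ℝ)..t, lam⁻¹ * (t - s) ^ (-α) * g s := by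
  simp only [fractionalPrimitive, mul_assoc, intervalIntegral.integral_const_mul]

theorem measurable_fractionalPrimitive {g : ℝ → ℝ} (hg : Measurable g) :
    Measurable (fractionalPrimitive α lam g) :=
  (measurable_intervalIntegral_of_measurable_uncurry (g := fun t s => (t - s) ^ (-α) * g s)
    (by fun_prop) 0).const_mul _

theorem fractionalPrimitive_const (hα : α < 1) (c t : ℝ) :
    fractionalPrimitive α lam (fun _ => c) t = lam⁻¹ * c * (t ^ (1 - α) / (1 - α)) := by
  rw [fractionalPrimitive, intervalIntegral.integral_mul_const, integral_sub_rpow_neg hα,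
    mul_comm _ c, mul_assoc]

theorem fractionalPrimitive_mono_on (hα : α < 1) (hlam : 0 < lam) {g₁ g₂ : ℝ → ℝ} {t : ℝ}
    (ht : 0 ≤ t) (hg₁ : MemLp g₁ ⊤ (volume.restrict (Ι 0 t)))
    (hg₂ : MemLp g₂ ⊤ (volume.restrict (Ι 0 t))) (h : ∀ s ∈ Icc 0 t, g₁ s ≤ g₂ s) :
    fractionalPrimitive α lam g₁ t ≤ fractionalPrimitive α lam g₂ t :=
  mul_le_mul_of_nonneg_left
    (intervalIntegral.integral_mul_mono_on_of_memLp_top ht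
      (intervalIntegrable_sub_rpow_neg hα 0 t)
      (fun _ hs => Real.rpow_nonneg (sub_nonneg.2 hs.2) _) hg₁ hg₂ h)
    (inv_nonneg.2 hlam.le)

theorem fractionalPrimitive_nonneg (hα : α < 1) (hlam : 0 < lam) {g : ℝ → ℝ} {t : ℝ}
    (ht : 0 ≤ t) (hg : MemLp g ⊤ (volume.restrict (Ι 0 t))) (h : ∀ s ∈ Icc 0 t, 0 ≤ g s) :
    0 ≤ fractionalPrimitive α lam g t := by
  simpa [fractionalPrimitive] using
    fractionalPrimitive_mono_on hα hlam ht MemLp.zero hg h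

theorem fractionalPrimitive_le_of_le (hα : α < 1) (hlam : 0 < lam) {g : ℝ → ℝ} {C M t : ℝ}
    (hC : 0 ≤ C) (ht : t ∈ Icc 0 M) (hg : MemLp g ⊤ (volume.restrict (Ι 0 t)))
    (h : ∀ s ∈ Icc 0 t, g s ≤ C) :
    fractionalPrimitive α lam g t ≤ lam⁻¹ * C * (M ^ (1 - α) / (1 - α)) := by
  calc fractionalPrimitive α lam g t ≤ fractionalPrimitive α lam (fun _ => C) t :=
        fractionalPrimitive_mono_on hα hlam ht.1 hg (memLp_top_const C) h
    _ = lam⁻¹ * C * (t ^ (1 - α) / (1 - α)) := fractionalPrimitive_const hα C t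
    _ ≤ lam⁻¹ * C * (M ^ (1 - α) / (1 - α)) := by
        have : 0 ≤ lam⁻¹ * C := mul_nonneg (inv_nonneg.2 hlam.le) hC
        gcongr
        exacts [ht.1, ht.2]

end FractionalPrimitive

section ImpactVolterra

variable {α lam κ γ : ℝ} {f : ℝ → ℝ}

noncomputable def impactPotential (α lam κ γ : ℝ) (f g : ℝ → ℝ) (t : ℝ) : ℝ :=
  κ * ∫ s in (0:ℝ)..t, lam⁻¹ * (t - s) ^ (-α) * (γ * f s - g s)

noncomputable def marketImpact (α lam κ γ : ℝ) (f g : ℝ → ℝ) (t : ℝ) : ℝ :=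
  κ * ∫ s in (0:ℝ)..t, (1 + lam⁻¹ * (t - s) ^ (-α)) * (γ * f s - g s)

theorem impactPotential_eq_sub (hα : α < 1) {g : ℝ → ℝ} {t : ℝ}
    (hf : MemLp f ⊤ (volume.restrict (Ι 0 t))) (hg : MemLp g ⊤ (volume.restrict (Ι 0 t))) :
    impactPotential α lam κ γ f g t =
      γ * κ * fractionalPrimitive α lam f t - κ * fractionalPrimitive α lam g t := by
  have hw := (intervalIntegrable_sub_rpow_neg hα 0 t).const_mul lam⁻¹
  simp only [impactPotential, fractionalPrimitive_eq_integral, mul_sub]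
  rw [intervalIntegral.integral_sub (hw.mul_memLp_top (hf.const_mul γ)) (hw.mul_memLp_top hg)]
  simp only [mul_left_comm _ γ, intervalIntegral.integral_const_mul]
  ring

theorem impactPotential_antitone_on (hα : α < 1) (hlam : 0 < lam) (hκ : 0 ≤ κ)
    {g₁ g₂ : ℝ → ℝ} {t : ℝ} (ht : 0 ≤ t) (hf : MemLp f ⊤ (volume.restrict (Ι 0 t)))
    (hg₁ : MemLp g₁ ⊤ (volume.restrict (Ι 0 t))) (hg₂ : MemLp g₂ ⊤ (volume.restrict (Ι 0 t)))
    (h : ∀ s ∈ Icc 0 t, g₁ s ≤ g₂ s) :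
    impactPotential α lam κ γ f g₂ t ≤ impactPotential α lam κ γ f g₁ t :=
  mul_le_mul_of_nonneg_left
    (intervalIntegral.integral_mul_mono_on_of_memLp_top ht
      ((intervalIntegrable_sub_rpow_neg hα 0 t).const_mul lam⁻¹)
      (fun _ hs => mul_nonneg (inv_nonneg.2 hlam.le) (Real.rpow_nonneg (sub_nonneg.2 hs.2) _))
      ((hf.const_mul γ).sub hg₂) ((hf.const_mul γ).sub hg₁) fun s hs => by linarith [h s hs])
    hκ

theorem marketImpact_antitone_on (hα : α < 1) (hlam : 0 < lam) (hκ : 0 ≤ κ)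
    {g₁ g₂ : ℝ → ℝ} {t : ℝ} (ht : 0 ≤ t) (hf : MemLp f ⊤ (volume.restrict (Ι 0 t)))
    (hg₁ : MemLp g₁ ⊤ (volume.restrict (Ι 0 t))) (hg₂ : MemLp g₂ ⊤ (volume.restrict (Ι 0 t)))
    (h : ∀ s ∈ Icc 0 t, g₁ s ≤ g₂ s) :
    marketImpact α lam κ γ f g₂ t ≤ marketImpact α lam κ γ f g₁ t :=
  mul_le_mul_of_nonneg_left
    (intervalIntegral.integral_mul_mono_on_of_memLp_top ht
      (intervalIntegrable_const.add ((intervalIntegrable_sub_rpow_neg hα 0 t).const_mul lam⁻¹))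
      (fun _ hs => add_nonneg zero_le_one
        (mul_nonneg (inv_nonneg.2 hlam.le) (Real.rpow_nonneg (sub_nonneg.2 hs.2) _)))
      ((hf.const_mul γ).sub hg₂) ((hf.const_mul γ).sub hg₁) fun s hs => by linarith [h s hs])
    hκ

def IsImpactSolution (α lam κ γ : ℝ) (H f r : ℝ → ℝ) (M : ℝ) : Prop :=
  ∀ t ∈ Icc 0 M, r t = H (impactPotential α lam κ γ f r t)

noncomputable def upperRate (α lam κ γ : ℝ) (H f : ℝ → ℝ) (t : ℝ) : ℝ :=
  H (γ * κ * fractionalPrimitive α lam f t)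

noncomputable def lowerRate (α lam κ γ : ℝ) (H f : ℝ → ℝ) (t : ℝ) : ℝ :=
  H (γ * κ * fractionalPrimitive α lam f t -
    κ * fractionalPrimitive α lam (upperRate α lam κ γ H f) t)

variable {H : ℝ → ℝ} {M : ℝ}

theorem measurable_upperRate (hH : Monotone H) (hf : Measurable f) :
    Measurable (upperRate α lam κ γ H f) :=
  hH.measurable.comp ((measurable_fractionalPrimitive hf).const_mul _)

theorem measurable_lowerRate (hH : Monotone H) (hf : Measurable f) :
    Measurable (lowerRate α lam κ γ H f) :=
  hH.measurable.comp (((measurable_fractionalPrimitive hf).const_mul _).sub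
    ((measurable_fractionalPrimitive (measurable_upperRate hH hf)).const_mul _))

theorem memLp_top_upperRate (hα : α < 1) (hlam : 0 < lam) (hγκ : 0 ≤ γ * κ)
    (hH_mono : Monotone H) (hH_nonneg : ∀ x, 0 ≤ H x) {C : ℝ} (hC : 0 ≤ C)
    (hf_meas : Measurable f) (hf : MemLp f ⊤ (volume.restrict (Icc 0 M)))
    (hfC : ∀ s ∈ Icc 0 M, f s ≤ C) :
    MemLp (upperRate α lam κ γ H f) ⊤ (volume.restrict (Icc 0 M)) := by
  refine memLp_top_restrict_of_forall_norm_le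
    (D := H (γ * κ * (lam⁻¹ * C * (M ^ (1 - α) / (1 - α))))) measurableSet_Icc
    (measurable_upperRate hH_mono hf_meas).aestronglyMeasurable fun t ht => ?_
  refine (Real.norm_of_nonneg (hH_nonneg _)).trans_le ?_
  exact hH_mono (mul_le_mul_of_nonneg_left (fractionalPrimitive_le_of_le hα hlam hC ht
    (hf.restrict_uIoc ht) fun s hs => hfC s ⟨hs.1, hs.2.trans ht.2⟩) hγκ)

theorem lowerRate_le_upperRate (hα : α < 1) (hlam : 0 < lam) (hκ : 0 ≤ κ)
    (hH_mono : Monotone H) (hH_nonneg : ∀ x, 0 ≤ H x) {t : ℝ} (ht : 0 ≤ t)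
    (hup : MemLp (upperRate α lam κ γ H f) ⊤ (volume.restrict (Ι 0 t))) :
    lowerRate α lam κ γ H f t ≤ upperRate α lam κ γ H f t :=
  hH_mono (sub_le_self _ (mul_nonneg hκ
    (fractionalPrimitive_nonneg hα hlam ht hup fun _ _ => hH_nonneg _)))

theorem memLp_top_lowerRate (hα : α < 1) (hlam : 0 < lam) (hκ : 0 ≤ κ)
    (hH_mono : Monotone H) (hH_nonneg : ∀ x, 0 ≤ H x) (hf_meas : Measurable f)
    (hup : MemLp (upperRate α lam κ γ H f) ⊤ (volume.restrict (Icc 0 M))) :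
    MemLp (lowerRate α lam κ γ H f) ⊤ (volume.restrict (Icc 0 M)) := by
  refine hup.of_le (measurable_lowerRate hH_mono hf_meas).aestronglyMeasurable
    (ae_restrict_of_forall_mem measurableSet_Icc fun t ht => ?_)
  exact abs_le_abs_of_nonneg (hH_nonneg _)
    (lowerRate_le_upperRate hα hlam hκ hH_mono hH_nonneg ht.1 (hup.restrict_uIoc ht))

theorem upperRate_eq_impactPotential_zero (hα : α < 1) {t : ℝ}
    (hf : MemLp f ⊤ (volume.restrict (Ι 0 t))) :
    upperRate α lam κ γ H f t = H (impactPotential α lam κ γ f 0 t) := by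
  rw [upperRate, impactPotential_eq_sub hα hf MemLp.zero]
  simp [fractionalPrimitive]

theorem lowerRate_eq_impactPotential_upperRate (hα : α < 1) {t : ℝ}
    (hf : MemLp f ⊤ (volume.restrict (Ι 0 t)))
    (hup : MemLp (upperRate α lam κ γ H f) ⊤ (volume.restrict (Ι 0 t))) :
    lowerRate α lam κ γ H f t = H (impactPotential α lam κ γ f (upperRate α lam κ γ H f) t) := by
  rw [lowerRate, impactPotential_eq_sub hα hf hup]

theorem IsImpactSolution.le_upperRate {r : ℝ → ℝ} (hr : IsImpactSolution α lam κ γ H f r M)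
    (hα : α < 1) (hlam : 0 < lam) (hκ : 0 ≤ κ) (hH_mono : Monotone H)
    (hH_nonneg : ∀ x, 0 ≤ H x) (hf : MemLp f ⊤ (volume.restrict (Icc 0 M)))
    (hr_Lp : MemLp r ⊤ (volume.restrict (Icc 0 M))) {t : ℝ} (ht : t ∈ Icc 0 M) :
    r t ≤ upperRate α lam κ γ H f t := by
  rw [hr t ht, upperRate_eq_impactPotential_zero hα (hf.restrict_uIoc ht)]
  exact hH_mono (impactPotential_antitone_on hα hlam hκ ht.1 (hf.restrict_uIoc ht) MemLp.zero
    (hr_Lp.restrict_uIoc ht) fun s hs => hr s ⟨hs.1, hs.2.trans ht.2⟩ ▸ hH_nonneg _)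

theorem IsImpactSolution.lowerRate_le {r : ℝ → ℝ} (hr : IsImpactSolution α lam κ γ H f r M)
    (hα : α < 1) (hlam : 0 < lam) (hκ : 0 ≤ κ) (hH_mono : Monotone H)
    (hH_nonneg : ∀ x, 0 ≤ H x) (hf : MemLp f ⊤ (volume.restrict (Icc 0 M)))
    (hr_Lp : MemLp r ⊤ (volume.restrict (Icc 0 M)))
    (hup : MemLp (upperRate α lam κ γ H f) ⊤ (volume.restrict (Icc 0 M))) {t : ℝ}
    (ht : t ∈ Icc 0 M) :
    lowerRate α lam κ γ H f t ≤ r t := by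
  rw [hr t ht, lowerRate_eq_impactPotential_upperRate hα (hf.restrict_uIoc ht)
    (hup.restrict_uIoc ht)]
  exact hH_mono (impactPotential_antitone_on hα hlam hκ ht.1 (hf.restrict_uIoc ht)
    (hr_Lp.restrict_uIoc ht) (hup.restrict_uIoc ht) fun s hs =>
      hr.le_upperRate hα hlam hκ hH_mono hH_nonneg hf hr_Lp ⟨hs.1, hs.2.trans ht.2⟩)

end ImpactVolterra

theorem stmt_19_general
    (α lam κ γ M : ℝ) (hα1 : α < 1) (hlam : 0 < lam)
    (hκ : 0 < κ) (hγ : 0 < γ)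
    (f : ℝ → ℝ) (hf_meas : Measurable f)
    (hf_nonneg : ∀ t, 0 ≤ t → 0 ≤ f t)
    (hf_bdd : ∃ C, ∀ t, 0 ≤ t → f t ≤ C)
    (H : ℝ → ℝ) (hH_mono : Monotone H)
    (hH_zero : ∀ x, x ≤ 0 → H x = 0)
    (F rp rm : ℝ → ℝ)
    (hF : ∀ t : ℝ, F t = lam⁻¹ * ∫ s in (0:ℝ)..t, (t - s) ^ (-α) * f s)
    (hrp : ∀ t : ℝ, rp t = H (γ * κ * F t))
    (hrm : ∀ t : ℝ, rm t = H (γ * κ * F t -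
      κ * ∫ u in (0:ℝ)..t, lam⁻¹ * (t - u) ^ (-α) * H (γ * κ * F u)))
    (r : ℝ → ℝ) (hr_cont : ContinuousOn r (Icc 0 M))
    (hr_eq : ∀ t ∈ Icc (0:ℝ) M,
      r t = H (κ * ∫ s in (0:ℝ)..t, lam⁻¹ * (t - s) ^ (-α) * (γ * f s - r s))) :
    ∀ t ∈ Icc (0:ℝ) M,
      (rm t ≤ r t ∧ r t ≤ rp t) ∧
      (κ * (∫ s in (0:ℝ)..t, (1 + lam⁻¹ * (t - s) ^ (-α)) * (γ * f s - rp s))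
          ≤ κ * ∫ s in (0:ℝ)..t, (1 + lam⁻¹ * (t - s) ^ (-α)) * (γ * f s - r s) ∧
        κ * (∫ s in (0:ℝ)..t, (1 + lam⁻¹ * (t - s) ^ (-α)) * (γ * f s - r s))
          ≤ κ * ∫ s in (0:ℝ)..t, (1 + lam⁻¹ * (t - s) ^ (-α)) * (γ * f s - rm s)) := by
  obtain ⟨C, hC⟩ := hf_bdd
  have hH_nonneg : ∀ x, 0 ≤ H x := fun x =>
    hH_zero (min x 0) (min_le_right x 0) ▸ hH_mono (min_le_left x 0)
  obtain rfl : F = fractionalPrimitive α lam f := funext hF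
  obtain rfl : rp = upperRate α lam κ γ H f := funext hrp
  obtain rfl : rm = lowerRate α lam κ γ H f := funext fun t => by
    rw [hrm, lowerRate, fractionalPrimitive_eq_integral (upperRate α lam κ γ H f)]
    rfl
  have hf_Lp : MemLp f ⊤ (volume.restrict (Icc 0 M)) :=
    memLp_top_restrict_of_forall_norm_le measurableSet_Icc hf_meas.aestronglyMeasurable
      fun s hs => (Real.norm_of_nonneg (hf_nonneg s hs.1)).trans_le (hC s hs.1)
  have hrp_Lp := memLp_top_upperRate (κ := κ) hα1 hlam (mul_pos hγ hκ).le hH_mono hH_nonneg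
    ((hf_nonneg 0 le_rfl).trans (hC 0 le_rfl)) hf_meas hf_Lp fun s hs => hC s hs.1
  have hrm_Lp := memLp_top_lowerRate hα1 hlam hκ.le hH_mono hH_nonneg hf_meas hrp_Lp
  have hr_Lp := hr_cont.memLp_top_restrict (μ := volume) isCompact_Icc measurableSet_Icc
  have hr : IsImpactSolution α lam κ γ H f r M := hr_eq
  have hr_le_rp := fun t (ht : t ∈ Icc 0 M) =>
    hr.le_upperRate hα1 hlam hκ.le hH_mono hH_nonneg hf_Lp hr_Lp ht
  have hrm_le_r := fun t (ht : t ∈ Icc 0 M) =>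
    hr.lowerRate_le hα1 hlam hκ.le hH_mono hH_nonneg hf_Lp hr_Lp hrp_Lp ht
  intro t ht
  exact ⟨⟨hrm_le_r t ht, hr_le_rp t ht⟩,
    marketImpact_antitone_on hα1 hlam hκ.le ht.1 (hf_Lp.restrict_uIoc ht) (hr_Lp.restrict_uIoc ht)
      (hrp_Lp.restrict_uIoc ht) fun s hs => hr_le_rp s ⟨hs.1, hs.2.trans ht.2⟩,
    marketImpact_antitone_on hα1 hlam hκ.le ht.1 (hf_Lp.restrict_uIoc ht) (hrm_Lp.restrict_uIoc ht)
      (hr_Lp.restrict_uIoc ht) fun s hs => hrm_le_r s ⟨hs.1, hs.2.trans ht.2⟩⟩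

/-- Explicit bounds on the solution of the impact Volterra equation and on the
macroscopic market impact: `r₋ ≤ r_γ ≤ r₊` and hence `MI₋ ≤ MI ≤ MI₊`, where
`r₊(s) = H(γ κ F(s))`,
`r₋(s) = H(γ κ F(s) − κ ∫₀ˢ λ⁻¹ (s−u)^{−α} H(γ κ F(u)) du)`, and
`F(t) = λ⁻¹ ∫₀ᵗ (t−s)^{−α} f(s) ds`. -/
theorem stmt_19
    (α lam κ γ M : ℝ) (hα0 : 0 < α) (hα1 : α < 1) (hlam : 0 < lam)
    (hκ : 0 < κ) (hγ : 0 < γ) (hM : 0 < M)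
    (f : ℝ → ℝ) (hf_meas : Measurable f)
    (hf_nonneg : ∀ t, 0 ≤ t → 0 ≤ f t)
    (hf_bdd : ∃ C, ∀ t, 0 ≤ t → f t ≤ C)
    (H : ℝ → ℝ) (hH_mono : Monotone H) (hH_lip : LocallyLipschitz H)
    (hH_zero : ∀ x, x ≤ 0 → H x = 0)
    (F rp rm : ℝ → ℝ)
    (hF : ∀ t : ℝ, F t = lam⁻¹ * ∫ s in (0:ℝ)..t, (t - s) ^ (-α) * f s)
    (hrp : ∀ t : ℝ, rp t = H (γ * κ * F t))
    (hrm : ∀ t : ℝ, rm t = H (γ * κ * F t -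
      κ * ∫ u in (0:ℝ)..t, lam⁻¹ * (t - u) ^ (-α) * H (γ * κ * F u)))
    (r : ℝ → ℝ) (hr_cont : ContinuousOn r (Icc 0 M))
    (hr_eq : ∀ t ∈ Icc (0:ℝ) M,
      r t = H (κ * ∫ s in (0:ℝ)..t, lam⁻¹ * (t - s) ^ (-α) * (γ * f s - r s))) :
    ∀ t ∈ Icc (0:ℝ) M,
      (rm t ≤ r t ∧ r t ≤ rp t) ∧
      (κ * (∫ s in (0:ℝ)..t, (1 + lam⁻¹ * (t - s) ^ (-α)) * (γ * f s - rp s))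
          ≤ κ * ∫ s in (0:ℝ)..t, (1 + lam⁻¹ * (t - s) ^ (-α)) * (γ * f s - r s) ∧
        κ * (∫ s in (0:ℝ)..t, (1 + lam⁻¹ * (t - s) ^ (-α)) * (γ * f s - r s))
          ≤ κ * ∫ s in (0:ℝ)..t, (1 + lam⁻¹ * (t - s) ^ (-α)) * (γ * f s - rm s)) :=
  stmt_19_general α lam κ γ M hα1 hlam hκ hγ f hf_meas hf_nonneg hf_bdd H hH_mono hH_zero F rp rm hF
    hrp hrm r hr_cont hr_eq
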